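/- arXiv:1610.04275 — 4 statements merged into one kernel-verified Lean document; each statement's English description precedes it below -/
import Mathlib

section
/- Let A be a graded skew PBW extension of the ℕ-graded K-algebra R, with generators x₁,…,xₙ, and let (Aₚ)_{p∈ℕ} be the subspaces defined in the context. Then (i) Rₚ ⊆ Aₚ for every p ∈ ℕ, and (ii) A is the internal direct sum of the subspaces Aₚ: every element of A lies in the sum of the Aₚ's, and the family (Aₚ)_{p∈ℕ} is independent (each Aₚ intersects the sum of the other A_q's trivially). -/
/-!
Expanding `a ∈ A` in the PBW basis as `a = ∑ c_α x^α` and each coefficient `c_α ∈ R` along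
the grading of `R`, `a` becomes a sum of terms `r x^α` with `r ∈ R_t`, which lie in
`A_{t + |α|}`; this gives `R_p ⊆ A_p` and `∑ A_p = A`. Conversely, the `β`-th coefficient of an
element of `A_p` lies in `R_{p - |β|}` (and vanishes if `|β| > p`). For fixed `β` these subspaces
are independent as `p` varies, being a shift of the grading of `R`, and an element of `A` is
determined by its coefficients, so the `A_p` are independent.
-/

noncomputable section

open scoped BigOperators

/-- The monomial `x₁^{α₁} ⋯ xₙ^{αₙ}` with factors in increasing index order. -/
def pbwMonomial {A : Type*} [Ring A] {n : ℕ} (x : Fin n → A) (α : Fin n → ℕ) : A :=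
  (List.ofFn fun i => x i ^ α i).prod

/-- `A` is a skew PBW extension of the `K`-subalgebra `R` with generators `x i`. -/
structure IsSkewPBWExtension (K : Type*) {A : Type*} [Field K] [Ring A] [Algebra K A]
    (R : Subalgebra K A) {n : ℕ} (x : Fin n → A) : Prop where
  isBasis : ∃ b : Module.Basis (Fin n → ℕ) R A, ∀ α, (b α : A) = pbwMonomial x α
  coeff_comm : ∀ i : Fin n, ∀ r ∈ R, r ≠ 0 →
    ∃ c ∈ R, c ≠ 0 ∧ x i * r - c * x i ∈ R
  gens_comm : ∀ i j : Fin n, ∃ c ∈ R, c ≠ 0 ∧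
    ∃ r0 ∈ R, ∃ rr : Fin n → A, (∀ k, rr k ∈ R) ∧
      x j * x i - c * (x i * x j) = r0 + ∑ k, rr k * x k

/-- `A` is a graded skew PBW extension of the ℕ-graded algebra `R`,
whose grading is given by the family `RG` of `K`-subspaces of `A`. -/
structure IsGradedSkewPBWExtension (K : Type*) {A : Type*} [Field K] [Ring A] [Algebra K A]
    (R : Subalgebra K A) (RG : ℕ → Submodule K A) {n : ℕ} (x : Fin n → A)
    extends IsSkewPBWExtension K R x : Prop where
  grading_le : ∀ p, RG p ≤ Subalgebra.toSubmodule R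
  grading_sup : (⨆ p, RG p) = Subalgebra.toSubmodule R
  grading_indep : iSupIndep RG
  grading_one : (1 : A) ∈ RG 0
  grading_mul : ∀ p q : ℕ, ∀ a ∈ RG p, ∀ b ∈ RG q, a * b ∈ RG (p + q)
  sigma_delta : ∀ i : Fin n, ∃ σ : R →+* R, Function.Bijective σ ∧
    (∀ p : ℕ, ∀ r : R, (r : A) ∈ RG p → ((σ r : A) ∈ RG p)) ∧
    ∃ δ : R → R,
      (∀ r s : R, δ (r + s) = δ r + δ s) ∧
      (∀ r s : R, δ (r * s) = σ r * δ s + δ r * s) ∧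
      (∀ p : ℕ, ∀ r : R, (r : A) ∈ RG p → ((δ r : A) ∈ RG (p + 1))) ∧
      (∀ r : R, x i * (r : A) = (σ r : A) * x i + (δ r : A))
  gens_comm_graded : ∀ i j : Fin n, ∃ c : R, IsUnit c ∧ (c : A) ∈ RG 0 ∧
    ∃ r0 ∈ RG 2, ∃ rr : Fin n → A, (∀ k, rr k ∈ RG 1) ∧
      x j * x i - (c : A) * (x i * x j) = r0 + ∑ k, rr k * x k

/-- The `p`-th graded component of a graded skew PBW extension: the `K`-span of the
elements `r · x^α` with `r ∈ R_t` and `t + |α| = p`. -/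
def gradedPart (K : Type*) {A : Type*} [Field K] [Ring A] [Algebra K A]
    (RG : ℕ → Submodule K A) {n : ℕ} (x : Fin n → A) (p : ℕ) : Submodule K A :=
  Submodule.span K
    {a : A | ∃ (t : ℕ) (α : Fin n → ℕ), ∃ r ∈ RG t, t + (∑ i, α i) = p ∧ a = r * pbwMonomial x α}

theorem iSupIndep.shift {α : Type*} [CompleteLattice α] {t : ℕ → α} (ht : iSupIndep t) (k : ℕ) :
    iSupIndep fun p => if k ≤ p then t (p - k) else ⊥ := by
  intro p
  dsimp only
  split_ifs with hp
  · refine (ht (p - k)).mono_right (iSup₂_le fun q hq => ?_)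
    split_ifs with hkq
    · exact le_iSup₂ (f := fun s (_ : s ≠ p - k) => t s) (q - k) (by omega)
    · exact bot_le
  · exact disjoint_bot_left

theorem iSupIndep_iInf_comap {R M N ι κ : Type*} [Semiring R] [AddCommMonoid M] [Module R M]
    [AddCommMonoid N] [Module R N] (f : κ → M →ₗ[R] N) (hf : ∀ m, (∀ k, f k m = 0) → m = 0)
    (S : ι → κ → Submodule R N) (hS : ∀ k, iSupIndep (S · k)) :
    iSupIndep fun i => ⨅ k, (S i k).comap (f k) := by
  intro i
  rw [Submodule.disjoint_def]
  intro m hm hm'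
  refine hf m fun k => Submodule.disjoint_def.mp (hS k i) _ ((Submodule.mem_iInf _).mp hm k) ?_
  have hle : (⨆ j, ⨆ _ : j ≠ i, ⨅ k, (S j k).comap (f k)) ≤
      (⨆ j, ⨆ _ : j ≠ i, S j k).comap (f k) :=
    iSup₂_le fun j hj => (iInf_le _ k).trans
      (Submodule.comap_mono (le_iSup₂ (f := fun j (_ : j ≠ i) => S j k) j hj))
  exact hle hm'

section BasisCoord

variable {K A ι : Type*} [CommSemiring K] [Semiring A] [Algebra K A] {R : Subalgebra K A}

def basisCoord (b : Module.Basis ι R A) (i : ι) : A →ₗ[K] A :=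
  R.val.toLinearMap ∘ₗ (b.coord i).restrictScalars K

theorem basisCoord_apply (b : Module.Basis ι R A) (i : ι) (a : A) :
    basisCoord b i a = b.repr a i := rfl

theorem basisCoord_mul_basis (b : Module.Basis ι R A) (i j : ι) {r : A} (hr : r ∈ R) :
    basisCoord b i (r * b j) = Finsupp.single j r i := by
  rw [basisCoord_apply, ← smul_eq_mul, ← Subalgebra.smul_def (⟨r, hr⟩ : R), map_smul,
    b.repr_self, Finsupp.smul_single_one]
  obtain rfl | hji := eq_or_ne j i
  · simp
  · simp [Finsupp.single_eq_of_ne' hji]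

theorem eq_zero_of_forall_basisCoord_eq_zero (b : Module.Basis ι R A) {a : A}
    (ha : ∀ i, basisCoord b i a = 0) : a = 0 :=
  b.ext_elem fun i => by simpa [basisCoord_apply] using ha i

end BasisCoord

section GradedPart

variable {K A : Type*} [Field K] [Ring A] [Algebra K A] {RG : ℕ → Submodule K A} {n : ℕ}
  {x : Fin n → A}

theorem mul_pbwMonomial_mem_gradedPart {t : ℕ} {r : A} (hr : r ∈ RG t) (α : Fin n → ℕ) :
    r * pbwMonomial x α ∈ gradedPart K RG x (t + ∑ i, α i) :=
  Submodule.subset_span ⟨t, α, r, hr, rfl, rfl⟩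

theorem le_gradedPart (p : ℕ) : RG p ≤ gradedPart K RG x p := fun r hr => by
  simpa [pbwMonomial] using mul_pbwMonomial_mem_gradedPart (x := x) hr 0

theorem mul_pbwMonomial_mem_iSup_gradedPart {r : A} (hr : r ∈ ⨆ t, RG t) (α : Fin n → ℕ) :
    r * pbwMonomial x α ∈ ⨆ p, gradedPart K RG x p := by
  refine Submodule.iSup_induction RG (motive := fun r => r * pbwMonomial x α ∈ _) hr
    (fun t r hr => Submodule.mem_iSup_of_mem _ (mul_pbwMonomial_mem_gradedPart hr α)) ?_ ?_
  · simp
  · intro r s hr hs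
    simpa only [add_mul] using add_mem hr hs

variable {R : Subalgebra K A} {b : Module.Basis (Fin n → ℕ) R A}

theorem iSup_gradedPart_eq_top (hb : ∀ α, (b α : A) = pbwMonomial x α)
    (hR : Subalgebra.toSubmodule R ≤ ⨆ t, RG t) : ⨆ p, gradedPart K RG x p = ⊤ := by
  refine eq_top_iff.mpr fun a _ => ?_
  rw [← b.linearCombination_repr a, Finsupp.linearCombination_apply]
  refine Submodule.finsuppSum_mem _ _ _ _ fun α _ => ?_
  rw [Subalgebra.smul_def, smul_eq_mul, hb]
  exact mul_pbwMonomial_mem_iSup_gradedPart (hR (b.repr a α).2) α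

theorem gradedPart_le_iInf_comap_basisCoord (hb : ∀ α, (b α : A) = pbwMonomial x α)
    (hRG : ∀ t, RG t ≤ Subalgebra.toSubmodule R) (p : ℕ) :
    gradedPart K RG x p ≤
      ⨅ β, (if ∑ i, β i ≤ p then RG (p - ∑ i, β i) else ⊥).comap (basisCoord b β) := by
  rw [gradedPart, Submodule.span_le]
  rintro _ ⟨t, α, r, hr, rfl, rfl⟩
  refine (Submodule.mem_iInf _).mpr fun β => ?_
  rw [Submodule.mem_comap, ← hb, basisCoord_mul_basis b β α (hRG t hr)]
  obtain rfl | hαβ := eq_or_ne α β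
  · rw [Finsupp.single_eq_same, if_pos (Nat.le_add_left _ t), Nat.add_sub_cancel]
    exact hr
  · rw [Finsupp.single_eq_of_ne' hαβ]
    exact zero_mem _

end GradedPart

/-- If `A` is a graded skew PBW extension of the ℕ-graded `K`-algebra `R`,
then (i) `R_p ⊆ A_p` for all `p`, and (ii) `A` is the internal direct sum of the
subspaces `A_p`: they span `A` and form an independent family. -/
theorem gradedSkewPBW_isInternalDirectSum
    {K A : Type*} [Field K] [Ring A] [Algebra K A]
    (R : Subalgebra K A) (RG : ℕ → Submodule K A) {n : ℕ} (x : Fin n → A)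
    (h : IsGradedSkewPBWExtension K R RG x) :
    (∀ p : ℕ, RG p ≤ gradedPart K RG x p) ∧
    (⨆ p : ℕ, gradedPart K RG x p) = ⊤ ∧
    iSupIndep (fun p : ℕ => gradedPart K RG x p) := by
  obtain ⟨b, hb⟩ := h.isBasis
  refine ⟨le_gradedPart, iSup_gradedPart_eq_top hb h.grading_sup.ge, ?_⟩
  have hcoord := iSupIndep_iInf_comap (basisCoord b)
    (fun _ => eq_zero_of_forall_basisCoord_eq_zero b) _
    (fun β => h.grading_indep.shift (∑ i, β i))
  exact hcoord.mono (gradedPart_le_iInf_comap_basisCoord hb h.grading_le)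
end
end

section
/- Let A be a skew PBW extension of R with generators x₁,…,xₙ. Then for each 1 ≤ i ≤ n there exist an injective ring endomorphism σᵢ : R → R and a σᵢ-derivation δᵢ : R → R (an additive map satisfying δᵢ(rs) = σᵢ(r)δᵢ(s) + δᵢ(r)s for all r, s ∈ R) such that xᵢr = σᵢ(r)xᵢ + δᵢ(r) for every r ∈ R. -/
/-!
The monomials `1 = x^0` and `xᵢ = x^{eᵢ}` are distinct members of a left `R`-basis, so `xᵢ` and `1`
are left `R`-linearly independent, and condition (ii) writes each `xᵢ r` uniquely as
`σᵢ(r) xᵢ + δᵢ(r)`. Comparing this with the expansions of `xᵢ (r + s)` and `(xᵢ r) s` shows that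
`σᵢ` is a ring endomorphism and `δᵢ` a `σᵢ`-derivation. For `r ≠ 0`, uniqueness identifies `σᵢ(r)`
with the nonzero `c_{i,r}` of (ii), so `σᵢ` is injective.
-/

noncomputable section

open scoped BigOperators

/-- `A` is a skew PBW extension of the subring `R` with generators `x i`:
the monomials `x^α` form a basis of `A` as a left `R`-module, and conditions (ii), (iii)
of the definition hold. -/
structure IsSkewPBWExtensionOfSubring {A : Type*} [Ring A] (R : Subring A)
    {n : ℕ} (x : Fin n → A) : Prop where
  isBasis : ∃ b : Module.Basis (Fin n → ℕ) R A, ∀ α, (b α : A) = pbwMonomial x α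
  coeff_comm : ∀ i : Fin n, ∀ r ∈ R, r ≠ 0 →
    ∃ c ∈ R, c ≠ 0 ∧ x i * r - c * x i ∈ R
  gens_comm : ∀ i j : Fin n, ∃ c ∈ R, c ≠ 0 ∧
    ∃ r0 ∈ R, ∃ rr : Fin n → A, (∀ k, rr k ∈ R) ∧
      x j * x i - c * (x i * x j) = r0 + ∑ k, rr k * x k

theorem List.prod_ofFn_eq_apply_of_forall_ne {M : Type*} [Monoid M] {n : ℕ} (f : Fin n → M)
    (i : Fin n) (hf : ∀ k ≠ i, f k = 1) : (List.ofFn f).prod = f i := by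
  induction n with
  | zero => exact i.elim0
  | succ n ih =>
    rw [List.ofFn_succ, List.prod_cons]
    cases i using Fin.cases with
    | zero =>
      rw [List.prod_eq_one, mul_one]
      simpa using fun k => hf k.succ (Fin.succ_ne_zero k)
    | succ j =>
      rw [hf 0 (Fin.succ_ne_zero j).symm, one_mul]
      exact ih (fun k => f k.succ) j fun k hk => hf k.succ (Fin.succ_injective _ |>.ne hk)

section pbwMonomial

variable {A : Type*} [Ring A] {n : ℕ} (x : Fin n → A)

@[simp]
theorem pbwMonomial_zero : pbwMonomial x 0 = 1 := by
  simp [pbwMonomial]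

@[simp]
theorem pbwMonomial_single (i : Fin n) : pbwMonomial x (Pi.single i 1) = x i := by
  rw [pbwMonomial, List.prod_ofFn_eq_apply_of_forall_ne _ i fun k hk => by simp [hk]]
  simp

end pbwMonomial

section SkewDerivation

variable {A : Type*} [Ring A] {R : Subring A} {y : A}

theorem Subring.eq_of_mul_add_eq (hy : LinearIndependent R ![y, 1]) {c d c' d' : R}
    (h : (c : A) * y + d = c' * y + d') : c = c' ∧ d = d' :=
  hy.eq_of_pair (by simpa [Subring.smul_def] using h)

theorem Subring.exists_ringHom_skewDerivation (hy : LinearIndependent R ![y, 1])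
    (hmem : ∀ r : R, ∃ c d : R, y * r = c * y + d) :
    ∃ σ : R →+* R, ∃ δ : R → R,
      (∀ r s : R, δ (r + s) = δ r + δ s) ∧
      (∀ r s : R, δ (r * s) = σ r * δ s + δ r * s) ∧
      ∀ r : R, y * r = σ r * y + δ r := by
  choose σ δ hσδ using hmem
  have map_add : ∀ r s, σ (r + s) = σ r + σ s ∧ δ (r + s) = δ r + δ s := fun r s =>
    eq_of_mul_add_eq hy <| by
      rw [← hσδ]; push_cast; rw [mul_add, hσδ, hσδ]; noncomm_ring
  have map_mul : ∀ r s, σ (r * s) = σ r * σ s ∧ δ (r * s) = σ r * δ s + δ r * s := fun r s =>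
    eq_of_mul_add_eq hy <| by
      rw [← hσδ]; push_cast
      calc y * (r * s) = (y * r) * s := (mul_assoc ..).symm
        _ = σ r * (y * s) + δ r * s := by rw [hσδ]; noncomm_ring
        _ = _ := by rw [hσδ]; noncomm_ring
  have map_one : σ 1 = 1 := (eq_of_mul_add_eq hy (c' := 1) (d' := 0) <| by rw [← hσδ]; simp).1
  exact ⟨.mk' ⟨⟨σ, map_one⟩, fun r s => (map_mul r s).1⟩ fun r s => (map_add r s).1, δ,
    fun r s => (map_add r s).2, fun r s => (map_mul r s).2, hσδ⟩

end SkewDerivation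

namespace IsSkewPBWExtensionOfSubring

variable {A : Type*} [Ring A] {R : Subring A} {n : ℕ} {x : Fin n → A}

theorem linearIndependent_gen_one (h : IsSkewPBWExtensionOfSubring R x) (i : Fin n) :
    LinearIndependent R ![x i, 1] := by
  obtain ⟨b, hb⟩ := h.isBasis
  have hinj : Function.Injective ![(Pi.single i 1 : Fin n → ℕ), 0] := by
    have hne : (Pi.single i 1 : Fin n → ℕ) ≠ 0 := Pi.single_ne_zero_iff.2 one_ne_zero
    simp [Function.Injective, Fin.forall_fin_two, hne, hne.symm]
  convert b.linearIndependent.comp _ hinj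
  ext k
  fin_cases k <;> simp [hb]

theorem exists_gen_mul_eq (h : IsSkewPBWExtensionOfSubring R x) (i : Fin n) {r : R}
    (hr : r ≠ 0) : ∃ c d : R, c ≠ 0 ∧ x i * r = c * x i + d := by
  obtain ⟨c, hcR, hc, hd⟩ := h.coeff_comm i r r.2 (by simpa using hr)
  exact ⟨⟨c, hcR⟩, ⟨_, hd⟩, by simpa using hc, by simp⟩

end IsSkewPBWExtensionOfSubring

/-- If `A` is a skew PBW extension of `R` with generators `x₁,…,xₙ`, then
for each `i` there exist an injective ring endomorphism `σᵢ : R → R` and a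
`σᵢ`-derivation `δᵢ : R → R` such that `xᵢ r = σᵢ(r) xᵢ + δᵢ(r)` for every `r ∈ R`. -/
theorem skewPBW_exists_sigma_delta
    {A : Type*} [Ring A] (R : Subring A) {n : ℕ} (x : Fin n → A)
    (h : IsSkewPBWExtensionOfSubring R x) :
    ∀ i : Fin n, ∃ σ : R →+* R, Function.Injective σ ∧
      ∃ δ : R → R,
        (∀ r s : R, δ (r + s) = δ r + δ s) ∧
        (∀ r s : R, δ (r * s) = σ r * δ s + δ r * s) ∧
        (∀ r : R, x i * (r : A) = (σ r : A) * x i + (δ r : A)) := by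
  intro i
  have hy := h.linearIndependent_gen_one i
  have hmem (r : R) : ∃ c d : R, x i * r = c * x i + d := by
    rcases eq_or_ne r 0 with rfl | hr
    · exact ⟨0, 0, by simp⟩
    · obtain ⟨c, d, -, hcd⟩ := h.exists_gen_mul_eq i hr
      exact ⟨c, d, hcd⟩
  obtain ⟨σ, δ, hadd, hmul, hσδ⟩ := Subring.exists_ringHom_skewDerivation hy hmem
  refine ⟨σ, (injective_iff_map_eq_zero σ).2 fun r hσr => ?_, δ, hadd, hmul, hσδ⟩
  by_contra hr
  obtain ⟨c, d, hc, hcd⟩ := h.exists_gen_mul_eq i hr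
  exact hc ((Subring.eq_of_mul_add_eq hy ((hσδ r).symm.trans hcd)).1 ▸ hσr)
end
end

section
/- A finite collection X₁,…,X_z of subspaces of a K-vector space W is distributive if and only if there exists a direct sum decomposition W = ⊕_{j∈J} Wⱼ of W into subspaces such that each Xᵢ is the sum of a subfamily of the Wⱼ's, i.e. for each i there is Jᵢ ⊆ J with Xᵢ = Σ_{j∈Jᵢ} Wⱼ. -/
noncomputable section

/-- The sublattice of the lattice of `K`-subspaces of `W` generated by a set `S` of
subspaces: the smallest collection of subspaces containing `S` and closed under
intersection and sum. -/
def sublatticeGen {K W : Type*} [Field K] [AddCommGroup W] [Module K W]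
    (S : Set (Submodule K W)) : Set (Submodule K W) :=
  ⋂₀ {T : Set (Submodule K W) | S ⊆ T ∧
    (∀ a ∈ T, ∀ b ∈ T, a ⊓ b ∈ T) ∧ (∀ a ∈ T, ∀ b ∈ T, a ⊔ b ∈ T)}

/-- A collection `S` of subspaces of `W` is distributive if the sublattice of subspaces
it generates is distributive. -/
def IsDistributiveCollection {K W : Type*} [Field K] [AddCommGroup W] [Module K W]
    (S : Set (Submodule K W)) : Prop :=
  ∀ a ∈ sublatticeGen S, ∀ b ∈ sublatticeGen S, ∀ c ∈ sublatticeGen S,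
    a ⊓ (b ⊔ c) = (a ⊓ b) ⊔ (a ⊓ c)

/-!
If the sublattice generated by `X₁, …, X_z` is distributive, index the pieces of the
decomposition by the subsets `A ⊆ {1, …, z}`: the piece `W_A` is a complement, inside the
meet `M_A = ⋂_{i ∈ A} X_i`, of the sum of the meets `M_B` with `B ⊋ A`. Downward induction on
`A` gives `M_A = Σ_{B ⊇ A} W_B`, so `X_i = M_{i}` and `W = M_∅` are sums of pieces.
Distributivity gives `M_A ∩ Σ_{B ∈ G} M_B = Σ_{B ∈ G} M_{A ∪ B}`, which lies in the sum
removed from `M_A` when no `B ∈ G` is contained in `A`; so each piece meets the sum of the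
pieces of no smaller cardinality trivially, and the pieces are independent.
Conversely, for an independent family the sums `Σ_{j ∈ s} W_j` meet and join like the
index sets `s`, so they form a distributive sublattice containing every `X_i`.
-/

universe u v

open Set

section Lattice

variable {α : Type*} [Lattice α]

def DistribOn (L : Set α) : Prop :=
  ∀ a ∈ L, ∀ b ∈ L, ∀ c ∈ L, a ⊓ (b ⊔ c) = a ⊓ b ⊔ a ⊓ c

lemma DistribOn.inf_finsetSup [OrderBot α] {ι : Type*} {L : Set α} (hL : DistribOn L)
    (hsup : SupClosed L) {a : α} (ha : a ∈ L) {s : Finset ι} {g : ι → α}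
    (hg : ∀ i ∈ s, g i ∈ L) : a ⊓ s.sup g = s.sup fun i => a ⊓ g i := by
  classical
  induction s using Finset.induction_on with
  | empty => simp
  | insert i s hi ih =>
    have hg' : ∀ j ∈ s, g j ∈ L := fun j hj => hg j (Finset.mem_insert_of_mem hj)
    rcases s.eq_empty_or_nonempty with rfl | hs
    · simp
    rw [Finset.sup_insert, Finset.sup_insert, ← ih hg',
      hL a ha _ (hg i (Finset.mem_insert_self i s)) _ (hsup.finsetSup_mem hs hg')]

end Lattice

section Meets

variable {α ι : Type*} [CompleteLattice α] (X : ι → α)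

def supMeetsAbove (A : Finset ι) : α :=
  ⨆ B > A, B.inf X

lemma supMeetsAbove_le (A : Finset ι) : supMeetsAbove X A ≤ A.inf X :=
  iSup₂_le fun _ hB => Finset.inf_mono hB.le

variable {X} in
lemma inf_finsetSup_finsetInf [DecidableEq ι] (hX : DistribOn (latticeClosure (range X)))
    (A : Finset ι) {G : Finset (Finset ι)} (hG : ∀ B ∈ G, B.Nonempty) :
    A.inf X ⊓ G.sup (·.inf X) = G.sup fun B => (A ∪ B).inf X := by
  have hmem {B : Finset ι} (hB : B.Nonempty) : B.inf X ∈ latticeClosure (range X) :=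
    isSublattice_latticeClosure.infClosed.finsetInf_mem hB
      fun i _ => subset_latticeClosure (mem_range_self i)
  rcases A.eq_empty_or_nonempty with rfl | hA
  · simp
  rw [hX.inf_finsetSup isSublattice_latticeClosure.supClosed (hmem hA) fun B hB => hmem (hG B hB)]
  simp only [Finset.inf_union]

end Meets

section Decomposition

variable {α ι : Type*} [CompleteLattice α] [IsModularLattice α] [ComplementedLattice α]
  (X : ι → α)

def piece (A : Finset ι) : α :=
  (IsModularLattice.exists_disjoint_and_sup_eq (supMeetsAbove_le X A)).choose

lemma disjoint_supMeetsAbove_piece (A : Finset ι) : Disjoint (supMeetsAbove X A) (piece X A) :=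
  (IsModularLattice.exists_disjoint_and_sup_eq (supMeetsAbove_le X A)).choose_spec.1

lemma supMeetsAbove_sup_piece (A : Finset ι) : supMeetsAbove X A ⊔ piece X A = A.inf X :=
  (IsModularLattice.exists_disjoint_and_sup_eq (supMeetsAbove_le X A)).choose_spec.2

lemma piece_le (A : Finset ι) : piece X A ≤ A.inf X :=
  supMeetsAbove_sup_piece X A ▸ le_sup_right

lemma finsetInf_eq_iSup_piece [Finite ι] (A : Finset ι) : A.inf X = ⨆ B ≥ A, piece X B := by
  induction A using WellFoundedGT.induction with
  | _ A ih =>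
    refine le_antisymm ?_ (iSup₂_le fun B hB => (piece_le X B).trans (Finset.inf_mono hB))
    rw [← supMeetsAbove_sup_piece X A]
    refine sup_le (iSup₂_le fun B hB => ?_) (le_iSup₂_of_le A le_rfl le_rfl)
    exact (ih B hB).le.trans (biSup_mono fun C hC => hB.le.trans hC)

variable {X}

lemma disjoint_piece_finsetSup (hX : DistribOn (latticeClosure (range X)))
    {A : Finset ι} {G : Finset (Finset ι)} (hG : ∀ B ∈ G, ¬B ⊆ A) :
    Disjoint (piece X A) (G.sup (piece X)) := by
  classical
  have hnonempty : ∀ B ∈ G, B.Nonempty := fun B hB =>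
    Finset.nonempty_iff_ne_empty.2 fun h => hG B hB (h ▸ Finset.empty_subset A)
  have hmeets : A.inf X ⊓ G.sup (·.inf X) ≤ supMeetsAbove X A := by
    rw [inf_finsetSup_finsetInf hX A hnonempty]
    exact Finset.sup_le fun B hB => le_iSup₂_of_le (A ∪ B) (left_lt_sup.2 (hG B hB)) le_rfl
  rw [disjoint_iff_inf_le]
  calc piece X A ⊓ G.sup (piece X)
      ≤ supMeetsAbove X A ⊓ piece X A :=
        le_inf (le_trans (inf_le_inf (piece_le X A) (Finset.sup_mono_fun fun B _ => piece_le X B))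
          hmeets) inf_le_left
    _ ≤ ⊥ := (disjoint_supMeetsAbove_piece X A).le_bot

lemma iSupIndep_piece [Fintype ι] (hX : DistribOn (latticeClosure (range X))) :
    iSupIndep (piece X) := by
  classical
  rw [iSupIndep_iff_supIndep_univ]
  refine Finset.induction_on_min_value Finset.card Finset.univ (Finset.supIndep_empty _)
    fun A G hA hmin ih => ih.insert (disjoint_piece_finsetSup hX fun B hB hBA => hA ?_)
  exact Finset.eq_of_subset_of_card_le hBA (hmin B hB) ▸ hB

theorem exists_iSupIndep_of_distribOn [Fintype ι]
    (hX : DistribOn (latticeClosure (range X))) :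
    ∃ C : Finset ι → α, iSupIndep C ∧ ⨆ A, C A = ⊤ ∧
      ∀ i, X i = ⨆ A ∈ {A : Finset ι | i ∈ A}, C A := by
  refine ⟨piece X, iSupIndep_piece hX, ?_, fun i => ?_⟩
  · simpa using (finsetInf_eq_iSup_piece X ∅).symm
  · simpa using finsetInf_eq_iSup_piece X {i}

end Decomposition

section Independent

variable {α J : Type*} [CompleteLattice α] [IsModularLattice α] [IsCompactlyGenerated α]
  {C : J → α}

lemma iSupIndep.biSup_inf_biSup (hC : iSupIndep C) (s t : Set J) :
    (⨆ j ∈ s, C j) ⊓ ⨆ j ∈ t, C j = ⨆ j ∈ s ∩ t, C j :=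
  calc (⨆ j ∈ s, C j) ⊓ ⨆ j ∈ t, C j
      = ((⨆ j ∈ s ∩ t, C j) ⊔ ⨆ j ∈ s \ t, C j) ⊓ ⨆ j ∈ t, C j := by
        rw [← iSup_union, inter_union_sdiff]
    _ = (⨆ j ∈ s ∩ t, C j) ⊔ (⨆ j ∈ s \ t, C j) ⊓ ⨆ j ∈ t, C j :=
        sup_inf_assoc_of_le _ (biSup_mono fun _ hj => hj.2)
    _ = ⨆ j ∈ s ∩ t, C j := by
        rw [(hC.disjoint_biSup_biSup disjoint_sdiff_left).eq_bot, sup_bot_eq]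

theorem iSupIndep.distribOn_latticeClosure (hC : iSupIndep C) {S : Set α}
    (hS : S ⊆ range fun s : Set J => ⨆ j ∈ s, C j) : DistribOn (latticeClosure S) := by
  have hsub : IsSublattice (range fun s : Set J => ⨆ j ∈ s, C j) :=
    { supClosed := by
        rintro _ ⟨s, rfl⟩ _ ⟨t, rfl⟩
        exact ⟨s ∪ t, iSup_union⟩
      infClosed := by
        rintro _ ⟨s, rfl⟩ _ ⟨t, rfl⟩
        exact ⟨s ∩ t, (hC.biSup_inf_biSup s t).symm⟩ }
  intro a ha b hb c hc
  obtain ⟨s, rfl⟩ := latticeClosure_min hS hsub ha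
  obtain ⟨t, rfl⟩ := latticeClosure_min hS hsub hb
  obtain ⟨u, rfl⟩ := latticeClosure_min hS hsub hc
  simp only [← iSup_union, hC.biSup_inf_biSup, inter_union_distrib_left]

end Independent

lemma sublatticeGen_eq_latticeClosure {K W : Type*} [Field K] [AddCommGroup W] [Module K W]
    (S : Set (Submodule K W)) : sublatticeGen S = latticeClosure S := by
  refine (sInter_subset_of_mem ?_).antisymm (latticeClosure_min ?_ ?_)
  · exact ⟨subset_latticeClosure, fun _ ha _ hb => isSublattice_latticeClosure.infClosed ha hb,
      fun _ ha _ hb => isSublattice_latticeClosure.supClosed ha hb⟩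
  · exact fun _ hx => mem_sInter.2 fun _ hT => hT.1 hx
  · exact
      { supClosed := fun _ ha _ hb => mem_sInter.2 fun T hT =>
          hT.2.2 _ (mem_sInter.1 ha T hT) _ (mem_sInter.1 hb T hT)
        infClosed := fun _ ha _ hb => mem_sInter.2 fun T hT =>
          hT.2.1 _ (mem_sInter.1 ha T hT) _ (mem_sInter.1 hb T hT) }

/-- A finite collection `X₁,…,X_z` of subspaces of a `K`-vector space `W`
is distributive iff there is a direct sum decomposition `W = ⊕_{j∈J} Wⱼ` such that each
`Xᵢ` is the sum of a subfamily of the `Wⱼ`'s. -/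
theorem distributive_iff_directSum_decomposition
    {K : Type u} {W : Type v} [Field K] [AddCommGroup W] [Module K W]
    {z : ℕ} (X : Fin z → Submodule K W) :
    IsDistributiveCollection (Set.range X) ↔
      ∃ (J : Type v) (Wj : J → Submodule K W),
        iSupIndep Wj ∧ (⨆ j, Wj j) = ⊤ ∧
        ∀ i : Fin z, ∃ s : Set J, X i = ⨆ j ∈ s, Wj j := by
  change DistribOn (sublatticeGen _) ↔ _
  rw [sublatticeGen_eq_latticeClosure]
  constructor
  · intro hX
    obtain ⟨C, hC, hCtop, hXC⟩ := exists_iSupIndep_of_distribOn hX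
    refine ⟨ULift (Finset (Fin z)), C ∘ ULift.down, hC.comp ULift.down_injective, ?_,
      fun i => ⟨{A | i ∈ A.down}, ?_⟩⟩
    · exact (ULift.down_surjective.iSup_comp C).trans hCtop
    · rw [hXC i]
      exact (ULift.down_surjective.iSup_comp fun A => ⨆ (_ : i ∈ A), C A).symm
  · rintro ⟨J, Wj, hWj, -, hXWj⟩
    refine hWj.distribOn_latticeClosure ?_
    rintro _ ⟨i, rfl⟩
    obtain ⟨s, hs⟩ := hXWj i
    exact ⟨s, hs.symm⟩
end
end

section
/- A finite collection X₁,…,X_z of subspaces of a K-vector space W is distributive if and only if there exists a basis B of W such that each Xᵢ is the K-linear span of a subset of B. -/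
/-!
If every `Xᵢ` is spanned by part of a linearly independent set `B`, then so is every member of
the generated sublattice, because on subsets of `B` taking spans turns `∩` and `∪` into `⊓` and
`⊔`; distributivity is then inherited from sets.

Conversely, let `A_F = ⨅_{i ∈ F} Xᵢ` (so `A_∅ = ⊤`) and choose `D_F` complementing, inside
`A_F`, the join of all `A_G` with `G ⊋ F`. Downward induction on `F` gives
`A_F = ⨆_{G ⊇ F} D_G`. The `D_F` are independent: if `F` has minimal size in a family `𝒢`,
distributivity gives `A_F ⊓ ⨆_{G ∈ 𝒢} A_G = ⨆_{G ∈ 𝒢} A_{F ∪ G}`, and each `F ∪ G` is a strict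
superset of `F`, so this join is one `D_F` was chosen to avoid. Hence the union of bases of the
`D_F` is a basis of `W`, and `Xᵢ = A_{{i}}` is spanned by the part coming from the `F ∋ i`.
-/

noncomputable section

open Finset Submodule

section SublatticeGen

variable {K W : Type*} [Field K] [AddCommGroup W] [Module K W] {S : Set (Submodule K W)}
  {a b : Submodule K W}

theorem subset_sublatticeGen : S ⊆ sublatticeGen S := fun _ hp _ hT => hT.1 hp

theorem inf_mem_sublatticeGen (ha : a ∈ sublatticeGen S) (hb : b ∈ sublatticeGen S) :
    a ⊓ b ∈ sublatticeGen S :=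
  fun T hT => hT.2.1 a (ha T hT) b (hb T hT)

theorem sup_mem_sublatticeGen (ha : a ∈ sublatticeGen S) (hb : b ∈ sublatticeGen S) :
    a ⊔ b ∈ sublatticeGen S :=
  fun T hT => hT.2.2 a (ha T hT) b (hb T hT)

theorem sublatticeGen_subset {T : Set (Submodule K W)} (hST : S ⊆ T)
    (hinf : ∀ a ∈ T, ∀ b ∈ T, a ⊓ b ∈ T) (hsup : ∀ a ∈ T, ∀ b ∈ T, a ⊔ b ∈ T) :
    sublatticeGen S ⊆ T :=
  Set.sInter_subset_of_mem ⟨hST, hinf, hsup⟩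

theorem finset_inf_mem_sublatticeGen {ι : Type*} {s : Finset ι} {f : ι → Submodule K W}
    (hs : s.Nonempty) (hf : ∀ i ∈ s, f i ∈ sublatticeGen S) : s.inf f ∈ sublatticeGen S :=
  inf'_eq_inf hs f ▸ inf'_mem _ (fun _ hx _ hy => inf_mem_sublatticeGen hx hy) s hs f hf

theorem finset_sup_mem_sublatticeGen {ι : Type*} {s : Finset ι} {f : ι → Submodule K W}
    (hs : s.Nonempty) (hf : ∀ i ∈ s, f i ∈ sublatticeGen S) : s.sup f ∈ sublatticeGen S :=
  sup'_eq_sup hs f ▸ sup'_mem _ (fun _ hx _ hy => sup_mem_sublatticeGen hx hy) s hs f hf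

theorem IsDistributiveCollection.inf_finset_sup (hd : IsDistributiveCollection S) {ι : Type*}
    {s : Finset ι} {f : ι → Submodule K W} (ha : a ∈ sublatticeGen S)
    (hf : ∀ i ∈ s, f i ∈ sublatticeGen S) : a ⊓ s.sup f = s.sup fun i => a ⊓ f i := by
  classical
  induction s using Finset.induction_on with
  | empty => simp
  | insert i s _ ih =>
    have hs : ∀ j ∈ s, f j ∈ sublatticeGen S := fun j hj => hf j (mem_insert_of_mem hj)
    rw [sup_insert, sup_insert, ← ih hs]
    rcases s.eq_empty_or_nonempty with rfl | hne
    · simp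
    · exact hd a ha _ (hf i (mem_insert_self i s)) _ (finset_sup_mem_sublatticeGen hne hs)

end SublatticeGen

section Decomposition

variable {α ι : Type*} [CompleteLattice α] {X : ι → α} {D : Finset ι → α}

variable (X) in
def supInfAbove (F : Finset ι) : α :=
  ⨆ G, ⨆ (_ : F ⊂ G), G.inf X

-- Only nonempty meets: the empty one is `⊤`, which need not lie in the generated sublattice.
variable (X) in
def InfsDistribOverSups : Prop :=
  ∀ F : Finset ι, F.Nonempty → ∀ 𝒢 : Finset (Finset ι), (∀ G ∈ 𝒢, G.Nonempty) →
    F.inf X ⊓ 𝒢.sup (·.inf X) = 𝒢.sup fun G => F.inf X ⊓ G.inf X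

theorem supInfAbove_le (F : Finset ι) : supInfAbove X F ≤ F.inf X :=
  iSup₂_le fun _ hFG => inf_mono hFG.subset

theorem iSup_superset_eq_inf [Finite ι] (hD : ∀ F, supInfAbove X F ⊔ D F = F.inf X)
    (F : Finset ι) : ⨆ G, ⨆ (_ : F ⊆ G), D G = F.inf X := by
  induction F using WellFoundedGT.induction with
  | _ F ih =>
    refine le_antisymm (iSup₂_le fun G hFG => ?_) ?_
    · exact (hD G ▸ le_sup_right).trans (inf_mono hFG)
    rw [← hD F]
    refine sup_le (iSup₂_le fun G hFG => ?_) (le_iSup₂_of_le F subset_rfl le_rfl)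
    rw [← ih G hFG]
    exact iSup₂_mono' fun H hGH => ⟨H, hFG.subset.trans hGH, le_rfl⟩

theorem inf_sup_inf_le_supInfAbove [DecidableEq ι] (hX : InfsDistribOverSups X)
    {m : Finset ι} {𝒢 : Finset (Finset ι)} (hm : m ∉ 𝒢) (hmin : ∀ G ∈ 𝒢, m.card ≤ G.card) :
    m.inf X ⊓ 𝒢.sup (·.inf X) ≤ supInfAbove X m := by
  have hdist : m.inf X ⊓ 𝒢.sup (·.inf X) = 𝒢.sup fun G => (m ∪ G).inf X := by
    rcases m.eq_empty_or_nonempty with rfl | hne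
    · simp
    · simp only [inf_union]
      exact hX m hne 𝒢 fun G hG => card_pos.mp (hne.card_pos.trans_le (hmin G hG))
  rw [hdist]
  refine Finset.sup_le fun G hG => le_iSup₂_of_le (m ∪ G) ?_ le_rfl
  refine ssubset_of_subset_of_ne subset_union_left fun h => hm ?_
  rwa [eq_of_subset_of_card_le (h ▸ subset_union_right : G ⊆ m) (hmin G hG)] at hG

theorem supIndep_of_disjoint_supInfAbove [DecidableEq ι] [IsModularLattice α]
    (hX : InfsDistribOverSups X)
    (hdisj : ∀ F, Disjoint (supInfAbove X F) (D F)) (hD : ∀ F, supInfAbove X F ⊔ D F = F.inf X)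
    (𝒢 : Finset (Finset ι)) : 𝒢.SupIndep D := by
  have hDle : ∀ F, D F ≤ F.inf X := fun F => hD F ▸ le_sup_right
  refine Finset.induction_on_min_value card 𝒢 (supIndep_empty D) fun m 𝒢 hm hmin ih => ?_
  refine ih.insert (disjoint_iff_inf_le.mpr (hdisj m ?_ inf_le_left))
  calc D m ⊓ 𝒢.sup D ≤ m.inf X ⊓ 𝒢.sup (·.inf X) :=
        inf_le_inf (hDle m) (sup_mono_fun fun G _ => hDle G)
    _ ≤ supInfAbove X m := inf_sup_inf_le_supInfAbove hX hm hmin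

theorem exists_iSupIndep_iSup_superset_eq_inf [Fintype ι] [DecidableEq ι] [IsModularLattice α]
    [ComplementedLattice α] (hX : InfsDistribOverSups X) :
    ∃ D : Finset ι → α, iSupIndep D ∧ ∀ F, ⨆ G, ⨆ (_ : F ⊆ G), D G = F.inf X := by
  choose D hdisj hD using fun F =>
    IsModularLattice.exists_disjoint_and_sup_eq (supInfAbove_le (X := X) F)
  exact ⟨D, iSupIndep_iff_supIndep_univ.mpr (supIndep_of_disjoint_supInfAbove hX hdisj hD _),
    iSup_superset_eq_inf hD⟩

end Decomposition

section LinearIndependence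

theorem LinearIndependent.span_image_inter {R M ι : Type*} [Ring R] [AddCommGroup M] [Module R M]
    {v : ι → M} (hv : LinearIndependent R v) (s t : Set ι) :
    span R (v '' (s ∩ t)) = span R (v '' s) ⊓ span R (v '' t) := by
  refine le_antisymm (le_inf (span_mono (Set.image_mono Set.inter_subset_left))
    (span_mono (Set.image_mono Set.inter_subset_right))) fun x hx => ?_
  obtain ⟨hs, ht⟩ := mem_inf.mp hx
  rw [Finsupp.mem_span_image_iff_linearCombination] at hs ht ⊢
  obtain ⟨l, hl, rfl⟩ := hs
  obtain ⟨l', hl', hll'⟩ := ht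
  rw [hv.finsuppLinearCombination_injective hll'] at hl'
  exact ⟨l, (Finsupp.supported_inter (M := R) (R := R) s t).ge (mem_inf.mpr ⟨hl, hl'⟩), rfl⟩

theorem LinearIndepOn.span_inter {R M : Type*} [Ring R] [AddCommGroup M] [Module R M]
    {B s t : Set M} (hB : LinearIndepOn R id B) (hs : s ⊆ B) (ht : t ⊆ B) :
    span R (s ∩ t) = span R s ⊓ span R t := by
  have hB' : LinearIndependent R (Subtype.val : B → M) := hB
  have himage : ∀ u ⊆ B, Subtype.val '' (Subtype.val ⁻¹' u : Set B) = u := fun u hu =>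
    (Subtype.image_preimage_coe B u).trans (Set.inter_eq_right.mpr hu)
  calc span R (s ∩ t)
      = span R (Subtype.val '' ((Subtype.val ⁻¹' s : Set B) ∩ Subtype.val ⁻¹' t)) := by
        rw [Set.image_inter Subtype.val_injective, himage s hs, himage t ht]
    _ = span R s ⊓ span R t := by rw [hB'.span_image_inter, himage s hs, himage t ht]

variable {K W : Type*} [Field K] [AddCommGroup W] [Module K W]

theorem isDistributiveCollection_of_forall_eq_span {B : Set W} (hB : LinearIndepOn K id B)
    {S : Set (Submodule K W)} (hS : ∀ p ∈ S, ∃ s ⊆ B, p = span K s) :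
    IsDistributiveCollection S := by
  have hL : ∀ p ∈ sublatticeGen S, ∃ s ⊆ B, p = span K s := by
    refine sublatticeGen_subset hS ?_ ?_
    · rintro _ ⟨s, hs, rfl⟩ _ ⟨t, ht, rfl⟩
      exact ⟨s ∩ t, Set.inter_subset_left.trans hs, (hB.span_inter hs ht).symm⟩
    · rintro _ ⟨s, hs, rfl⟩ _ ⟨t, ht, rfl⟩
      exact ⟨s ∪ t, Set.union_subset hs ht, (span_union s t).symm⟩
  intro a ha b hb c hc
  obtain ⟨s, hs, rfl⟩ := hL a ha
  obtain ⟨t, ht, rfl⟩ := hL b hb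
  obtain ⟨u, hu, rfl⟩ := hL c hc
  rw [← span_union, ← hB.span_inter hs (Set.union_subset ht hu), ← hB.span_inter hs ht,
    ← hB.span_inter hs hu, ← span_union, Set.inter_union_distrib_left]

theorem exists_linearIndepOn_span_eq_iSup_of_iSupIndep {ι : Type*} {D : ι → Submodule K W}
    (hD : iSupIndep D) :
    ∃ B : Set W, LinearIndepOn K id B ∧ span K B = ⨆ i, D i ∧
      ∀ p : ι → Prop, ∃ s ⊆ B, span K s = ⨆ i, ⨆ (_ : p i), D i := by
  choose b _ hbspan hbind using fun i => exists_linearIndependent K (D i : Set W)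
  have hspan : ∀ i, span K (b i) = D i := fun i => by rw [hbspan, span_eq]
  refine ⟨⋃ i, b i, linearIndepOn_id_iUnion_finite hbind fun i t _ hi => ?_, ?_, fun p => ?_⟩
  · simp only [hspan]
    exact hD.disjoint_biSup hi
  · simp only [span_iUnion, hspan]
  · refine ⟨⋃ i, ⋃ (_ : p i), b i,
      Set.iUnion_mono fun i => Set.iUnion_subset fun _ => subset_rfl, ?_⟩
    simp only [span_iUnion₂, hspan]

end LinearIndependence

/-- A finite collection `X₁,…,X_z` of subspaces of a `K`-vector space `W`
is distributive iff there is a basis `B` of `W` such that each `Xᵢ` is the span of a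
subset of `B`. -/
theorem distributive_iff_basis_spanning_subsets
    {K W : Type*} [Field K] [AddCommGroup W] [Module K W]
    {z : ℕ} (X : Fin z → Submodule K W) :
    IsDistributiveCollection (Set.range X) ↔
      ∃ B : Set W, LinearIndependent K (fun b : B => (b : W)) ∧ Submodule.span K B = ⊤ ∧
        ∀ i : Fin z, ∃ s : Set W, s ⊆ B ∧ X i = Submodule.span K s := by
  constructor
  · intro hd
    have hmeet : ∀ F : Finset (Fin z), F.Nonempty → F.inf X ∈ sublatticeGen (Set.range X) :=
      fun F hF => finset_inf_mem_sublatticeGen hF fun i _ => subset_sublatticeGen ⟨i, rfl⟩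
    obtain ⟨D, hDind, hD⟩ := exists_iSupIndep_iSup_superset_eq_inf fun F hF 𝒢 h𝒢 =>
      hd.inf_finset_sup (hmeet F hF) fun G hG => hmeet G (h𝒢 G hG)
    obtain ⟨B, hB, hBspan, hBsub⟩ := exists_linearIndepOn_span_eq_iSup_of_iSupIndep hDind
    refine ⟨B, hB, ?_, fun i => ?_⟩
    · simpa [hBspan] using hD ∅
    · obtain ⟨s, hsB, hs⟩ := hBsub ({i} ⊆ ·)
      exact ⟨s, hsB, by rw [hs, hD, inf_singleton]⟩
  · rintro ⟨B, hB, -, hX⟩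
    exact isDistributiveCollection_of_forall_eq_span hB (Set.forall_mem_range.mpr hX)

end
end
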